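/- Let β ∈ ℝ with β > 0 (so Im(β) = 0), ε > 0, k ∈ ℕ, and R > exp^∘k(0) with M_{ε,k}(R) < β. Let D ⊆ ℂ satisfy Re(ζ) ≥ R for all ζ ∈ D, and let f : D → D satisfy |f(ζ) − (ζ + β)| ≤ M_{ε,k}(Re(ζ)) for all ζ ∈ D. Suppose moreover that f preserves real points: for every ζ ∈ D with Im(ζ) = 0, also Im(f(ζ)) = 0. Then for every ζ ∈ D with Im(ζ) = 0, the limit φ(ζ) := lim_{n→∞} (f^∘n(ζ) − n·β) exists and satisfies Im(φ(ζ)) = 0. -/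

import Mathlib

/-!
Along a real orbit the real parts grow by at least `δ = β - M_{ε,k}(R) > 0` per step. Since
`M_{ε,k} = -F'` for `F = ε⁻¹ (log^∘k)^{-ε}`, which is positive and decreasing, comparing each
error term with the drop of `F` over a step of length `≥ δ` (mean value theorem) telescopes to a
bound on `∑ M_{ε,k}(Re f^∘n ζ)`. So the increments of `f^∘n ζ - nβ` are absolutely summable, and
the limit is real because every term is.
-/

open Filter Set

/-- `M_{ε,k}(x) = (∏_{j=0}^{k-1} log^∘j(x))⁻¹ · (log^∘k(x))^{-(1+ε)}`. -/
noncomputable def Mfun (ε : ℝ) (k : ℕ) (x : ℝ) : ℝ :=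
  (∏ j ∈ Finset.range k, Real.log^[j] x)⁻¹ * (Real.log^[k] x) ^ (-(1 + ε))

open Topology

section SummableAlongSeparatedSequence

variable {g F : ℝ → ℝ} {a δ : ℝ} {x : ℕ → ℝ}

theorem mul_le_sub_of_hasDerivAt_neg (hg : AntitoneOn g (Ioi a))
    (hg0 : ∀ y ∈ Ioi a, 0 ≤ g y) (hF : ∀ y ∈ Ioi a, HasDerivAt F (-g y) y)
    {s t : ℝ} (hs : a < s) (hst : s + δ ≤ t) (hδ : 0 < δ) :
    δ * g t ≤ F s - F t := by
  have hst' : s < t := by linarith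
  obtain ⟨c, ⟨hsc, hct⟩, hc⟩ := exists_hasDerivAt_eq_slope F (fun y => -g y) hst'
    (fun y hy => (hF y (hs.trans_le hy.1)).continuousAt.continuousWithinAt)
    (fun y hy => hF y (hs.trans hy.1))
  have hca : c ∈ Ioi a := hs.trans hsc
  have hdrop : F s - F t = (t - s) * g c := by
    rw [eq_div_iff (sub_pos.2 hst').ne'] at hc
    linarith
  calc δ * g t ≤ δ * g c := mul_le_mul_of_nonneg_left (hg hca (hca.trans hct) hct.le) hδ.le
    _ ≤ (t - s) * g c := mul_le_mul_of_nonneg_right (by linarith) (hg0 c hca)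
    _ = F s - F t := hdrop.symm

theorem summable_comp_of_hasDerivAt_neg (hg : AntitoneOn g (Ioi a))
    (hg0 : ∀ y ∈ Ioi a, 0 ≤ g y) (hF : ∀ y ∈ Ioi a, HasDerivAt F (-g y) y)
    (hF0 : ∀ y ∈ Ioi a, 0 ≤ F y) (hδ : 0 < δ) (hxa : ∀ n, a < x n)
    (hx : ∀ n, x n + δ ≤ x (n + 1)) :
    Summable fun n => g (x n) := by
  refine (summable_nat_add_iff 1).mp (summable_of_sum_range_le (c := F (x 0) / δ)
    (fun n => hg0 _ (hxa _)) fun n => ?_)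
  rw [le_div_iff₀' hδ, Finset.mul_sum]
  calc ∑ i ∈ Finset.range n, δ * g (x (i + 1))
      ≤ ∑ i ∈ Finset.range n, (F (x i) - F (x (i + 1))) :=
        Finset.sum_le_sum fun i _ => mul_le_sub_of_hasDerivAt_neg hg hg0 hF (hxa i) (hx i) hδ
    _ = F (x 0) - F (x n) := Finset.sum_range_sub' _ _
    _ ≤ F (x 0) := sub_le_self _ (hF0 _ (hxa n))

end SummableAlongSeparatedSequence

theorem exists_tendsto_sub_nsmul_of_norm_le {E : Type*} [NormedAddCommGroup E] [CompleteSpace E]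
    {z : ℕ → E} {c : E} {u : ℕ → ℝ} (hz : ∀ n, ‖z (n + 1) - z n - c‖ ≤ u n)
    (hu : Summable u) :
    ∃ w, Tendsto (fun n => z n - n • c) atTop (𝓝 w) := by
  refine cauchySeq_tendsto_of_complete (cauchySeq_of_dist_le_of_summable u (fun n => ?_) hu)
  have hstep : z (n + 1) - (n + 1) • c - (z n - n • c) = z (n + 1) - z n - c := by
    rw [succ_nsmul]; abel
  rw [dist_comm, dist_eq_norm, hstep]
  exact hz n

section IteratedLog

open Real

theorem exp_iterate_zero_nonneg (m : ℕ) : 0 ≤ exp^[m] 0 := by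
  cases m with
  | zero => simp
  | succ n => rw [Function.iterate_succ_apply']; exact (exp_pos _).le

theorem exp_iterate_zero_le_succ (m : ℕ) : exp^[m] 0 ≤ exp^[m + 1] 0 := by
  rw [Function.iterate_succ_apply']
  linarith [add_one_le_exp (exp^[m] 0)]

variable {k : ℕ} {x y : ℝ}

theorem exp_iterate_lt_log_iterate (hx : exp^[k] 0 < x) {j : ℕ} (hj : j ≤ k) :
    exp^[k - j] 0 < log^[j] x := by
  induction j with
  | zero => simpa using hx
  | succ i ih =>
    have h := ih (by omega)
    rw [show k - i = k - (i + 1) + 1 by omega, Function.iterate_succ_apply'] at h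
    rw [Function.iterate_succ_apply']
    exact (lt_log_iff_exp_lt ((exp_pos _).trans h)).mpr h

theorem log_iterate_pos (hx : exp^[k] 0 < x) {j : ℕ} (hj : j ≤ k) : 0 < log^[j] x :=
  (exp_iterate_zero_nonneg _).trans_lt (exp_iterate_lt_log_iterate hx hj)

theorem log_iterate_le_log_iterate (hx : exp^[k] 0 < x) (hxy : x ≤ y) {j : ℕ} (hj : j ≤ k) :
    log^[j] x ≤ log^[j] y := by
  induction j with
  | zero => simpa using hxy
  | succ i ih =>
    rw [Function.iterate_succ_apply', Function.iterate_succ_apply']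
    exact log_le_log (log_iterate_pos hx (by omega)) (ih (by omega))

theorem prod_log_iterate_pos (hx : exp^[k] 0 < x) : 0 < ∏ j ∈ Finset.range k, log^[j] x :=
  Finset.prod_pos fun _ hj => log_iterate_pos hx (Finset.mem_range.mp hj).le

theorem hasDerivAt_log_iterate (hx : exp^[k] 0 < x) :
    HasDerivAt (log^[k]) (∏ j ∈ Finset.range k, log^[j] x)⁻¹ x := by
  induction k with
  | zero => simpa using hasDerivAt_id x
  | succ n ih =>
    have hlog := hasDerivAt_log (log_iterate_pos hx n.le_succ).ne'
    rw [Function.iterate_succ', Finset.prod_range_succ, mul_inv, mul_comm]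
    exact hlog.comp x (ih ((exp_iterate_zero_le_succ n).trans_lt hx))

end IteratedLog

section Mfun

open Real

variable {ε : ℝ} {k : ℕ} {x : ℝ}

theorem Mfun_pos (hx : exp^[k] 0 < x) : 0 < Mfun ε k x :=
  mul_pos (inv_pos.mpr (prod_log_iterate_pos hx)) (rpow_pos_of_pos (log_iterate_pos hx le_rfl) _)

theorem Mfun_antitoneOn (hε : -1 ≤ ε) : AntitoneOn (Mfun ε k) (Ioi (exp^[k] 0)) := by
  intro x hx y _ hxy
  have hlog := log_iterate_le_log_iterate hx hxy le_rfl
  have hprod : ∏ j ∈ Finset.range k, log^[j] x ≤ ∏ j ∈ Finset.range k, log^[j] y :=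
    Finset.prod_le_prod (fun j hj => (log_iterate_pos hx (Finset.mem_range.mp hj).le).le)
      fun j hj => log_iterate_le_log_iterate hx hxy (Finset.mem_range.mp hj).le
  exact mul_le_mul (inv_anti₀ (prod_log_iterate_pos hx) hprod)
    (rpow_le_rpow_of_nonpos (log_iterate_pos hx le_rfl) hlog (by linarith))
    (rpow_pos_of_pos ((log_iterate_pos hx le_rfl).trans_le hlog) _).le
    (inv_pos.mpr (prod_log_iterate_pos hx)).le

/-- `∫_x^∞ M_{ε,k}` for `ε > 0`. -/
noncomputable def MfunTail (ε : ℝ) (k : ℕ) (x : ℝ) : ℝ := ε⁻¹ * (log^[k] x) ^ (-ε)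

theorem MfunTail_nonneg (hε : 0 ≤ ε) (hx : exp^[k] 0 < x) : 0 ≤ MfunTail ε k x :=
  mul_nonneg (inv_nonneg.mpr hε) (rpow_nonneg (log_iterate_pos hx le_rfl).le _)

theorem hasDerivAt_MfunTail (hε : ε ≠ 0) (hx : exp^[k] 0 < x) :
    HasDerivAt (MfunTail ε k) (-Mfun ε k x) x := by
  have hrpow := hasDerivAt_rpow_const (p := -ε) (Or.inl (log_iterate_pos hx le_rfl).ne')
  refine ((hrpow.comp x (hasDerivAt_log_iterate hx)).const_mul ε⁻¹).congr_deriv ?_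
  rw [Mfun, show -ε - 1 = -(1 + ε) by ring]
  field_simp

end Mfun

theorem koenigs_limit_preserves_real_points_general
    (β : ℝ) (ε : ℝ) (hε : 0 < ε) (k : ℕ)
    (R : ℝ) (hR : Real.exp^[k] 0 < R) (hMR : Mfun ε k R < β)
    (D : Set ℂ) (hDre : ∀ ζ ∈ D, R ≤ ζ.re)
    (f : ℂ → ℂ) (hinv : Set.MapsTo f D D)
    (hbound : ∀ ζ ∈ D, ‖f ζ - (ζ + (β : ℂ))‖ ≤ Mfun ε k ζ.re)
    (hreal : ∀ ζ ∈ D, ζ.im = 0 → (f ζ).im = 0) :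
    ∀ ζ ∈ D, ζ.im = 0 →
      ∃ w : ℂ, Tendsto (fun n : ℕ => f^[n] ζ - (n : ℂ) * (β : ℂ)) atTop (nhds w) ∧
        w.im = 0 := by
  intro ζ hζ hζim
  have hmaps : MapsTo f (D ∩ {ζ | ζ.im = 0}) (D ∩ {ζ | ζ.im = 0}) :=
    fun ζ h => ⟨hinv h.1, hreal ζ h.1 h.2⟩
  have horbit : ∀ n, f^[n] ζ ∈ D ∩ {ζ | ζ.im = 0} :=
    fun n => hmaps.iterate n ⟨hζ, hζim⟩
  have hdom : ∀ n, Real.exp^[k] 0 < (f^[n] ζ).re := fun n => hR.trans_le (hDre _ (horbit n).1)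
  have hgap : ∀ n, (f^[n] ζ).re + (β - Mfun ε k R) ≤ (f^[n + 1] ζ).re := by
    intro n
    have hre := (Complex.abs_re_le_norm _).trans (hbound _ (horbit n).1)
    rw [abs_le] at hre
    have hM := Mfun_antitoneOn (ε := ε) (by linarith) hR (hdom n) (hDre _ (horbit n).1)
    rw [Function.iterate_succ_apply']
    simp only [Complex.sub_re, Complex.add_re, Complex.ofReal_re] at hre
    linarith [hre.1]
  have hsum : Summable fun n => Mfun ε k (f^[n] ζ).re :=
    summable_comp_of_hasDerivAt_neg (Mfun_antitoneOn (by linarith)) (fun y hy => (Mfun_pos hy).le)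
      (fun y hy => hasDerivAt_MfunTail hε.ne' hy) (fun y hy => MfunTail_nonneg hε.le hy)
      (sub_pos.2 hMR) hdom hgap
  have hincr : ∀ n, ‖f^[n + 1] ζ - f^[n] ζ - β‖ ≤ Mfun ε k (f^[n] ζ).re := fun n => by
    rw [Function.iterate_succ_apply', sub_sub]
    exact hbound _ (horbit n).1
  obtain ⟨w, hw⟩ := exists_tendsto_sub_nsmul_of_norm_le (z := (f^[·] ζ)) hincr hsum
  simp only [nsmul_eq_mul] at hw
  refine ⟨w, hw, (isClosed_eq Complex.continuous_im continuous_const).mem_of_tendsto hw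
    (.of_forall fun n => ?_)⟩
  simpa using (horbit n).2

theorem koenigs_limit_preserves_real_points
    (β : ℝ) (hβ : 0 < β) (ε : ℝ) (hε : 0 < ε) (k : ℕ)
    (R : ℝ) (hR : Real.exp^[k] 0 < R) (hMR : Mfun ε k R < β)
    (D : Set ℂ) (hDre : ∀ ζ ∈ D, R ≤ ζ.re)
    (f : ℂ → ℂ) (hinv : Set.MapsTo f D D)
    (hbound : ∀ ζ ∈ D, ‖f ζ - (ζ + (β : ℂ))‖ ≤ Mfun ε k ζ.re)
    (hreal : ∀ ζ ∈ D, ζ.im = 0 → (f ζ).im = 0) :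
    ∀ ζ ∈ D, ζ.im = 0 →
      ∃ w : ℂ, Tendsto (fun n : ℕ => f^[n] ζ - (n : ℂ) * (β : ℂ)) atTop (nhds w) ∧
        w.im = 0 :=
  koenigs_limit_preserves_real_points_general β ε hε k R hR hMR D hDre f hinv hbound hreal
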